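/- Let g : [0,1]^N → ℝ^M be a low-rank tensor-product model g(x) = Σ_{r=1}^R v_r ∏_{n=1}^N g_{n,r}(x_n), where each g_{n,r} : [0,1] → ℝ is continuously differentiable. Suppose there are constants c, L, V ≥ 0 such that ‖g_{n,r}‖ ≤ c, ‖g'_{n,r}‖ ≤ L, and ‖v_r‖ ≤ V for all n, r. Then the Dirichlet energy satisfies DE(g) ≤ R² V² N L² c^{2(N−1)}. In particular, if c < 1, the Dirichlet energy is exponentially small in the dimension N. -/

import Mathlib

/-!
The partial derivative `∂_q g` of a tensor-product model is again a tensor-product model, whose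
`q`-th factors are replaced by their derivatives. Pointwise, Cauchy–Schwarz over the `R` terms
gives `‖∑ r, a_r v_r‖² ≤ R V² ∑ r, a_r²`, and by Fubini the integral over the cube of a squared
product of univariate factors is the product of their squared L² norms, here at most
`L² c^{2(N-1)}`. Summing over the `R` terms and the `N` directions gives `R² V² N L² c^{2(N-1)}`.
-/

open MeasureTheory Finset Function

section ProductIntegral

variable {ι : Type*} [Fintype ι] {E : ι → Type*} [∀ i, MeasureSpace (E i)]
  [∀ i, SigmaFinite (volume : Measure (E i))]

theorem setIntegral_univ_pi_prod (f : (i : ι) → E i → ℝ) (s : (i : ι) → Set (E i)) :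
    ∫ x in Set.univ.pi s, ∏ i, f i (x i) = ∏ i, ∫ t in s i, f i t := by
  rw [volume_pi, Measure.restrict_pi_pi]
  exact integral_fintype_prod_eq_prod f

theorem setIntegral_univ_pi_prod_sq_le (f : (i : ι) → E i → ℝ) (s : (i : ι) → Set (E i))
    {b : ι → ℝ} (hb : ∀ i, ∫ t in s i, f i t ^ 2 ≤ b i) :
    ∫ x in Set.univ.pi s, (∏ i, f i (x i)) ^ 2 ≤ ∏ i, b i := by
  simp_rw [← prod_pow, setIntegral_univ_pi_prod fun i t => f i t ^ 2]
  exact prod_le_prod (fun i _ => integral_nonneg fun _ => sq_nonneg _) fun i _ => hb i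

end ProductIntegral

theorem setIntegral_Icc_le_sq_of_sqrt_intervalIntegral_le {f : ℝ → ℝ} {a b B : ℝ} (hab : a ≤ b)
    (h : √(∫ t in a..b, f t) ≤ B) : ∫ t in Set.Icc a b, f t ≤ B ^ 2 := by
  rw [integral_Icc_eq_integral_Ioc, ← intervalIntegral.integral_of_le hab]
  exact (Real.sqrt_le_iff.mp h).2

theorem norm_sum_smul_sq_le {κ F : Type*} [SeminormedAddCommGroup F] [NormedSpace ℝ F]
    (s : Finset κ) (a : κ → ℝ) (v : κ → F) {V : ℝ} (hv : ∀ r ∈ s, ‖v r‖ ≤ V) :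
    ‖∑ r ∈ s, a r • v r‖ ^ 2 ≤ #s * V ^ 2 * ∑ r ∈ s, a r ^ 2 := by
  have hnorm : ‖∑ r ∈ s, a r • v r‖ ≤ V * ∑ r ∈ s, |a r| := by
    rw [mul_sum]
    refine (norm_sum_le _ _).trans (sum_le_sum fun r hr => ?_)
    rw [norm_smul, Real.norm_eq_abs, mul_comm]
    exact mul_le_mul_of_nonneg_right (hv r hr) (abs_nonneg _)
  calc ‖∑ r ∈ s, a r • v r‖ ^ 2 ≤ V ^ 2 * (∑ r ∈ s, |a r|) ^ 2 := by
        rw [← mul_pow]; exact pow_le_pow_left₀ (norm_nonneg _) hnorm 2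
    _ ≤ V ^ 2 * (#s * ∑ r ∈ s, |a r| ^ 2) := by
        gcongr; exact sq_sum_le_card_mul_sum_sq
    _ = #s * V ^ 2 * ∑ r ∈ s, a r ^ 2 := by simp only [sq_abs]; ring

section TensorProductModel

variable {ι κ F : Type*} [Fintype ι] [Fintype κ] [NormedAddCommGroup F] [NormedSpace ℝ F]

theorem fderiv_prod_apply_single [DecidableEq ι] {f : ι → ℝ → ℝ} {x : ι → ℝ}
    (hf : ∀ n, DifferentiableAt ℝ (f n) (x n)) (q : ι) :
    fderiv ℝ (fun y : ι → ℝ => ∏ n, f n (y n)) x (Pi.single q 1) =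
      ∏ n, update f q (deriv (f q)) n (x n) := by
  have hfactor : ∀ n ∈ univ, HasFDerivAt (fun y : ι → ℝ => f n (y n))
      (deriv (f n) (x n) • ContinuousLinearMap.proj n) x := fun n _ =>
    (hf n).hasDerivAt.hasFDerivAt.comp x (hasFDerivAt_apply n x) |>.congr_fderiv
      (by ext; simp [mul_comm])
  rw [(HasFDerivAt.finsetProd hfactor).fderiv, ← mul_prod_erase univ _ (mem_univ q)]
  simp only [_root_.sum_apply, smul_apply, ContinuousLinearMap.proj_apply, Pi.single_apply,
    smul_eq_mul, mul_ite, mul_one, mul_zero, sum_ite_eq', mem_univ, ↓reduceIte, update_self]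
  rw [mul_comm]
  congr 1
  exact prod_congr rfl fun n hn => by rw [update_of_ne (ne_of_mem_erase hn)]

def tensorProductModel (v : κ → F) (g : ι → κ → ℝ → ℝ) (x : ι → ℝ) : F :=
  ∑ r, (∏ n, g n r (x n)) • v r

theorem continuous_tensorProductModel (v : κ → F) {g : ι → κ → ℝ → ℝ}
    (hg : ∀ n r, Continuous (g n r)) : Continuous (tensorProductModel v g) := by
  unfold tensorProductModel
  fun_prop

theorem fderiv_tensorProductModel_apply_single [DecidableEq ι] (v : κ → F)
    {g : ι → κ → ℝ → ℝ} (hg : ∀ n r, Differentiable ℝ (g n r)) (x : ι → ℝ) (q : ι) :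
    fderiv ℝ (tensorProductModel v g) x (Pi.single q 1) =
      tensorProductModel v (update g q fun r => deriv (g q r)) x := by
  have hprod : ∀ r, DifferentiableAt ℝ (fun y : ι → ℝ => ∏ n, g n r (y n)) x := by fun_prop
  unfold tensorProductModel
  rw [fderiv_fun_sum fun r _ => (hprod r).smul_const (v r)]
  simp only [fderiv_smul_const (hprod _), _root_.sum_apply, ContinuousLinearMap.smulRight_apply]
  refine sum_congr rfl fun r _ => ?_
  rw [fderiv_prod_apply_single (fun n => (hg n r).differentiableAt) q]
  congr 2 with n
  rcases eq_or_ne n q with rfl | hn <;> simp [*]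

theorem setIntegral_norm_sq_tensorProductModel_le {s : ι → Set ℝ} (hs : ∀ n, IsCompact (s n))
    {v : κ → F} {g : ι → κ → ℝ → ℝ} (hg : ∀ n r, Continuous (g n r)) {V : ℝ}
    (hv : ∀ r, ‖v r‖ ≤ V) {b : ι → ℝ} (hb : ∀ n r, ∫ t in s n, g n r t ^ 2 ≤ b n) :
    ∫ x in Set.univ.pi s, ‖tensorProductModel v g x‖ ^ 2 ≤
      Fintype.card κ ^ 2 * V ^ 2 * ∏ n, b n := by
  have hint : ∀ r, IntegrableOn (fun x : ι → ℝ => (∏ n, g n r (x n)) ^ 2) (Set.univ.pi s) :=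
    fun r => by
      refine ContinuousOn.integrableOn_compact (isCompact_univ_pi hs) (Continuous.continuousOn ?_)
      fun_prop
  calc ∫ x in Set.univ.pi s, ‖tensorProductModel v g x‖ ^ 2
      ≤ ∫ x in Set.univ.pi s, Fintype.card κ * V ^ 2 * ∑ r, (∏ n, g n r (x n)) ^ 2 := by
        refine integral_mono_of_nonneg (.of_forall fun _ => by positivity)
          ((integrable_finsetSum _ fun r _ => hint r).const_mul _) (.of_forall fun x => ?_)
        exact norm_sum_smul_sq_le _ _ _ fun r _ => hv r
    _ = Fintype.card κ * V ^ 2 * ∑ r, ∫ x in Set.univ.pi s, (∏ n, g n r (x n)) ^ 2 := by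
        rw [integral_const_mul, integral_finsetSum _ fun r _ => hint r]
    _ ≤ Fintype.card κ * V ^ 2 * ∑ _r : κ, ∏ n, b n := by
        gcongr with r
        exact setIntegral_univ_pi_prod_sq_le _ s fun n => hb n r
    _ = Fintype.card κ ^ 2 * V ^ 2 * ∏ n, b n := by
        rw [sum_const, card_univ, nsmul_eq_mul]; ring

theorem sum_sq_fderiv_tensorProductModel_apply_single [DecidableEq ι] {m : Type*} [Fintype m]
    (v : κ → EuclideanSpace ℝ m) {g : ι → κ → ℝ → ℝ} (hg : ∀ n r, Differentiable ℝ (g n r))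
    (x : ι → ℝ) :
    ∑ i, ∑ q, (fderiv ℝ (tensorProductModel v g) x (Pi.single q 1) i) ^ 2 =
      ∑ q, ‖tensorProductModel v (update g q fun r => deriv (g q r)) x‖ ^ 2 := by
  simp_rw [sum_comm (γ := m), EuclideanSpace.real_norm_sq_eq,
    fderiv_tensorProductModel_apply_single v hg]

theorem setIntegral_sum_sq_fderiv_tensorProductModel_le [DecidableEq ι] {m : Type*} [Fintype m]
    {s : ι → Set ℝ} (hs : ∀ n, IsCompact (s n)) {v : κ → EuclideanSpace ℝ m}
    {g : ι → κ → ℝ → ℝ} (hg : ∀ n r, ContDiff ℝ 1 (g n r)) {V C D : ℝ} (hv : ∀ r, ‖v r‖ ≤ V)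
    (hC : ∀ n r, ∫ t in s n, g n r t ^ 2 ≤ C) (hD : ∀ n r, ∫ t in s n, deriv (g n r) t ^ 2 ≤ D) :
    ∫ x in Set.univ.pi s, ∑ i, ∑ q, (fderiv ℝ (tensorProductModel v g) x (Pi.single q 1) i) ^ 2
      ≤ Fintype.card κ ^ 2 * V ^ 2 * Fintype.card ι * D * C ^ (Fintype.card ι - 1) := by
  set g' : ι → ι → κ → ℝ → ℝ := fun q => update g q fun r => deriv (g q r)
  have hg' (q n r) : Continuous (g' q n r) ∧
      ∫ t in s n, g' q n r t ^ 2 ≤ update (fun _ => C) q D n := by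
    rcases eq_or_ne n q with rfl | hn
    · simpa [g'] using ⟨(hg n r).continuous_deriv le_rfl, hD n r⟩
    · simpa [g', hn] using ⟨(hg n r).continuous, hC n r⟩
  have hpartial (q) : ∫ x in Set.univ.pi s, ‖tensorProductModel v (g' q) x‖ ^ 2 ≤
      Fintype.card κ ^ 2 * V ^ 2 * (D * C ^ (Fintype.card ι - 1)) := by
    refine (setIntegral_norm_sq_tensorProductModel_le hs (fun n r => (hg' q n r).1) hv
      fun n r => (hg' q n r).2).trans_eq ?_
    rw [prod_update_of_mem (mem_univ q), prod_const, card_univ_sdiff, card_singleton]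
  calc ∫ x in Set.univ.pi s, ∑ i, ∑ q, (fderiv ℝ (tensorProductModel v g) x (Pi.single q 1) i) ^ 2
      = ∑ q, ∫ x in Set.univ.pi s, ‖tensorProductModel v (g' q) x‖ ^ 2 := by
        simp_rw [sum_sq_fderiv_tensorProductModel_apply_single v
          fun n r => (hg n r).differentiable one_ne_zero]
        refine integral_finsetSum _ fun q _ => ContinuousOn.integrableOn_compact
          (isCompact_univ_pi hs) (Continuous.continuousOn ?_)
        exact (continuous_tensorProductModel v fun n r => (hg' q n r).1).norm.pow 2
    _ ≤ ∑ _q : ι, Fintype.card κ ^ 2 * V ^ 2 * (D * C ^ (Fintype.card ι - 1)) :=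
        sum_le_sum fun q _ => hpartial q
    _ = Fintype.card κ ^ 2 * V ^ 2 * Fintype.card ι * D * C ^ (Fintype.card ι - 1) := by
        rw [sum_const, card_univ, nsmul_eq_mul]; ring

end TensorProductModel

theorem tpbs_dirichlet_energy_exponential_bound_general (N M R : ℕ)
    (v : Fin R → EuclideanSpace ℝ (Fin M))
    (g : Fin N → Fin R → ℝ → ℝ)
    (hg : ∀ n r, ContDiff ℝ 1 (g n r))
    (c L V : ℝ)
    (hgc : ∀ n r, Real.sqrt (∫ t in (0:ℝ)..1, (g n r t) ^ 2) ≤ c)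
    (hgL : ∀ n r, Real.sqrt (∫ t in (0:ℝ)..1, (deriv (g n r) t) ^ 2) ≤ L)
    (hvV : ∀ r, ‖v r‖ ≤ V)
    (G : (Fin N → ℝ) → EuclideanSpace ℝ (Fin M))
    (hG : ∀ x, G x = ∑ r, (∏ n, g n r (x n)) • v r) :
    (∫ x in Set.univ.pi fun _ : Fin N => Set.Icc (0:ℝ) 1,
        ∑ i : Fin M, ∑ q : Fin N, (fderiv ℝ G x (Pi.single q 1) i) ^ 2) ≤
      (R : ℝ) ^ 2 * V ^ 2 * N * L ^ 2 * c ^ (2 * (N - 1)) := by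
  have hG' : G = tensorProductModel v g := funext hG
  have h := setIntegral_sum_sq_fderiv_tensorProductModel_le (fun _ => isCompact_Icc) hg hvV
    (fun n r => setIntegral_Icc_le_sq_of_sqrt_intervalIntegral_le zero_le_one (hgc n r))
    (fun n r => setIntegral_Icc_le_sq_of_sqrt_intervalIntegral_le zero_le_one (hgL n r))
  rw [hG', pow_mul]
  simpa only [Fintype.card_fin] using h

/-- If every univariate factor of a low-rank tensor-product model has L² norm at most `c`,
every derivative has L² norm at most `L`, and every vector `v_r` has norm at most `V`, then
the Dirichlet energy is bounded by `R² V² N L² c^{2(N-1)}`; in particular it is exponentially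
small in `N` when `c < 1`. -/
theorem tpbs_dirichlet_energy_exponential_bound (N M R : ℕ)
    (v : Fin R → EuclideanSpace ℝ (Fin M))
    (g : Fin N → Fin R → ℝ → ℝ)
    (hg : ∀ n r, ContDiff ℝ 1 (g n r))
    (c L V : ℝ) (hc : 0 ≤ c) (hL : 0 ≤ L) (hV : 0 ≤ V)
    (hgc : ∀ n r, Real.sqrt (∫ t in (0:ℝ)..1, (g n r t) ^ 2) ≤ c)
    (hgL : ∀ n r, Real.sqrt (∫ t in (0:ℝ)..1, (deriv (g n r) t) ^ 2) ≤ L)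
    (hvV : ∀ r, ‖v r‖ ≤ V)
    (G : (Fin N → ℝ) → EuclideanSpace ℝ (Fin M))
    (hG : ∀ x, G x = ∑ r, (∏ n, g n r (x n)) • v r) :
    (∫ x in Set.univ.pi fun _ : Fin N => Set.Icc (0:ℝ) 1,
        ∑ i : Fin M, ∑ q : Fin N, (fderiv ℝ G x (Pi.single q 1) i) ^ 2) ≤
      (R : ℝ) ^ 2 * V ^ 2 * N * L ^ 2 * c ^ (2 * (N - 1)) :=
  tpbs_dirichlet_energy_exponential_bound_general N M R v g hg c L V hgc hgL hvV G hG
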